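/- arXiv:1708.03469 — 4 statements merged into one kernel-verified Lean document; each statement's English description precedes it below -/
import Mathlib

section
/- Let n ∈ ℕ and let a_k, b_k (k = 1,...,n) be Laurent polynomials with a_k(z) = 2 + (1-z)^{2k} ã_k(z) and b_k(z) = m + (1-z)^{2k} b̃_k(z) for some Laurent polynomials ã_k, b̃_k. Then p(z₁,z₂) := ∑_{k=0}^{n-1} a_{n-k}(z₁) b_{k+1}(z₂) − ∑_{k=0}^{n-2} a_{n-k-1}(z₁) b_{k+1}(z₂) can be written as p(z₁,z₂) = 2m + ∑_h (1-z₁)^{α_h} (1-z₂)^{β_h} c_h(z₁,z₂) for finitely many Laurent polynomials c_h and exponents α_h, β_h ∈ ℕ₀ with α_h + β_h ≥ 2n. -/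
/-- `f : ℂ → ℂ` agrees on ℂ∖{0} with a Laurent polynomial. -/
def IsLaurent (f : ℂ → ℂ) : Prop :=
  ∃ (s : Finset ℤ) (co : ℤ → ℂ), ∀ z : ℂ, z ≠ 0 → f z = ∑ i ∈ s, co i * z ^ i

/-- `f : ℂ → ℂ → ℂ` agrees on (ℂ∖{0})² with a bivariate Laurent polynomial. -/
def IsLaurent2 (f : ℂ → ℂ → ℂ) : Prop :=
  ∃ (s : Finset (ℤ × ℤ)) (co : ℤ × ℤ → ℂ), ∀ z₁ z₂ : ℂ, z₁ ≠ 0 → z₂ ≠ 0 →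
    f z₁ z₂ = ∑ ij ∈ s, co ij * z₁ ^ ij.1 * z₂ ^ ij.2

lemma isLaurent_const_mul (c : ℂ) {f : ℂ → ℂ} (hf : IsLaurent f) :
    IsLaurent fun z => c * f z := by
  obtain ⟨s, co, h⟩ := hf
  refine ⟨s, fun i => c * co i, fun z hz => ?_⟩
  beta_reduce
  rw [h z hz, Finset.mul_sum]
  exact Finset.sum_congr rfl fun i _ => by ring

lemma isLaurent_one_sub_sq : IsLaurent fun z => (1 - z) ^ 2 := by
  refine ⟨{0, 1, 2}, fun i => if i = 0 then 1 else if i = 1 then -2 else 1, fun z hz => ?_⟩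
  beta_reduce
  rw [Finset.sum_insert (by norm_num), Finset.sum_insert (by norm_num), Finset.sum_singleton]
  norm_num [zpow_ofNat]
  ring

lemma isLaurent2_left {f : ℂ → ℂ} (hf : IsLaurent f) : IsLaurent2 fun z₁ _ => f z₁ := by
  obtain ⟨s, co, h⟩ := hf
  refine ⟨s.image (fun i => (i, 0)), fun q => co q.1, fun z₁ z₂ h₁ h₂ => ?_⟩
  beta_reduce
  rw [h z₁ h₁, Finset.sum_image (by intro a _ b _ hab; simpa using hab)]
  simp

lemma isLaurent2_right {f : ℂ → ℂ} (hf : IsLaurent f) : IsLaurent2 fun _ z₂ => f z₂ := by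
  obtain ⟨s, co, h⟩ := hf
  refine ⟨s.image (fun i => (0, i)), fun q => co q.2, fun z₁ z₂ h₁ h₂ => ?_⟩
  beta_reduce
  rw [h z₂ h₂, Finset.sum_image (by intro a _ b _ hab; simpa using hab)]
  simp [mul_comm]

lemma isLaurent2_mul {f g : ℂ → ℂ → ℂ} (hf : IsLaurent2 f) (hg : IsLaurent2 g) :
    IsLaurent2 fun z₁ z₂ => f z₁ z₂ * g z₁ z₂ := by
  classical
  obtain ⟨s, co, hs⟩ := hf
  obtain ⟨t, d, ht⟩ := hg
  refine ⟨(s ×ˢ t).image (fun pq => (pq.1.1 + pq.2.1, pq.1.2 + pq.2.2)),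
    fun k => ∑ pq ∈ (s ×ˢ t).filter (fun pq => (pq.1.1 + pq.2.1, pq.1.2 + pq.2.2) = k),
      co pq.1 * d pq.2, fun z₁ z₂ h₁ h₂ => ?_⟩
  beta_reduce
  rw [hs _ _ h₁ h₂, ht _ _ h₁ h₂]
  calc (∑ i ∈ s, co i * z₁ ^ i.1 * z₂ ^ i.2) * ∑ j ∈ t, d j * z₁ ^ j.1 * z₂ ^ j.2
      = ∑ pq ∈ s ×ˢ t, (co pq.1 * z₁ ^ pq.1.1 * z₂ ^ pq.1.2) *
          (d pq.2 * z₁ ^ pq.2.1 * z₂ ^ pq.2.2) := by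
        rw [Finset.sum_mul_sum, Finset.sum_product]
    _ = ∑ k ∈ (s ×ˢ t).image (fun pq => (pq.1.1 + pq.2.1, pq.1.2 + pq.2.2)),
          ∑ pq ∈ (s ×ˢ t).filter (fun pq => (pq.1.1 + pq.2.1, pq.1.2 + pq.2.2) = k),
            (co pq.1 * z₁ ^ pq.1.1 * z₂ ^ pq.1.2) * (d pq.2 * z₁ ^ pq.2.1 * z₂ ^ pq.2.2) :=
        (Finset.sum_fiberwise_of_maps_to (fun x hx => Finset.mem_image_of_mem _ hx) _).symm
    _ = ∑ k ∈ (s ×ˢ t).image (fun pq => (pq.1.1 + pq.2.1, pq.1.2 + pq.2.2)),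
          (∑ pq ∈ (s ×ˢ t).filter (fun pq => (pq.1.1 + pq.2.1, pq.1.2 + pq.2.2) = k),
            co pq.1 * d pq.2) * z₁ ^ k.1 * z₂ ^ k.2 := by
        refine Finset.sum_congr rfl fun k hk => ?_
        rw [Finset.sum_mul, Finset.sum_mul]
        refine Finset.sum_congr rfl fun pq hpq => ?_
        obtain ⟨-, hpqk⟩ := Finset.mem_filter.mp hpq
        subst hpqk
        rw [zpow_add₀ h₁, zpow_add₀ h₂]
        ring

lemma isLaurent2_add {f g : ℂ → ℂ → ℂ} (hf : IsLaurent2 f) (hg : IsLaurent2 g) :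
    IsLaurent2 fun z₁ z₂ => f z₁ z₂ + g z₁ z₂ := by
  classical
  obtain ⟨s, co, hs⟩ := hf
  obtain ⟨t, d, ht⟩ := hg
  refine ⟨s ∪ t, fun q => (if q ∈ s then co q else 0) + (if q ∈ t then d q else 0),
    fun z₁ z₂ h₁ h₂ => ?_⟩
  beta_reduce
  rw [hs _ _ h₁ h₂, ht _ _ h₁ h₂]
  have e : ∀ q ∈ s ∪ t,
      ((if q ∈ s then co q else 0) + (if q ∈ t then d q else 0)) * z₁ ^ q.1 * z₂ ^ q.2 =
      (if q ∈ s then co q * z₁ ^ q.1 * z₂ ^ q.2 else 0) +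
      (if q ∈ t then d q * z₁ ^ q.1 * z₂ ^ q.2 else 0) := by
    intro q _
    split_ifs <;> ring
  rw [Finset.sum_congr rfl e, Finset.sum_add_distrib, Finset.sum_ite_mem, Finset.sum_ite_mem,
    Finset.union_inter_cancel_left, Finset.union_inter_cancel_right]

lemma isLaurent2_sub {f g : ℂ → ℂ → ℂ} (hf : IsLaurent2 f) (hg : IsLaurent2 g) :
    IsLaurent2 fun z₁ z₂ => f z₁ z₂ - g z₁ z₂ := by
  classical
  obtain ⟨s, co, hs⟩ := hf
  obtain ⟨t, d, ht⟩ := hg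
  refine ⟨s ∪ t, fun q => (if q ∈ s then co q else 0) - (if q ∈ t then d q else 0),
    fun z₁ z₂ h₁ h₂ => ?_⟩
  beta_reduce
  rw [hs _ _ h₁ h₂, ht _ _ h₁ h₂]
  have e : ∀ q ∈ s ∪ t,
      ((if q ∈ s then co q else 0) - (if q ∈ t then d q else 0)) * z₁ ^ q.1 * z₂ ^ q.2 =
      (if q ∈ s then co q * z₁ ^ q.1 * z₂ ^ q.2 else 0) -
      (if q ∈ t then d q * z₁ ^ q.1 * z₂ ^ q.2 else 0) := by
    intro q _
    split_ifs <;> ring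
  rw [Finset.sum_congr rfl e, Finset.sum_sub_distrib, Finset.sum_ite_mem, Finset.sum_ite_mem,
    Finset.union_inter_cancel_left, Finset.union_inter_cancel_right]

lemma isLaurent2_congr {f g : ℂ → ℂ → ℂ} (hf : IsLaurent2 f)
    (h : ∀ z₁ z₂ : ℂ, z₁ ≠ 0 → z₂ ≠ 0 → g z₁ z₂ = f z₁ z₂) : IsLaurent2 g := by
  obtain ⟨s, co, hs⟩ := hf
  exact ⟨s, co, fun z₁ z₂ h₁ h₂ => (h z₁ z₂ h₁ h₂).trans (hs z₁ z₂ h₁ h₂)⟩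

/-- If a_k(z) = 2 + (1−z)^{2k} ã_k(z) and b_k(z) = m + (1−z)^{2k} b̃_k(z)
with ã_k, b̃_k Laurent polynomials, then
p(z₁,z₂) = ∑_{k=0}^{n-1} a_{n-k}(z₁) b_{k+1}(z₂) − ∑_{k=0}^{n-2} a_{n-k-1}(z₁) b_{k+1}(z₂)
decomposes as 2m + ∑_h (1−z₁)^{α_h}(1−z₂)^{β_h} c_h(z₁,z₂) with Laurent
polynomials c_h and α_h + β_h ≥ 2n. -/
theorem stmt5 (m n : ℕ) (hm : 2 ≤ m) (hn : 1 ≤ n)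
    (a b ta tb : ℕ → ℂ → ℂ)
    (hta : ∀ k, 1 ≤ k → k ≤ n → IsLaurent (ta k))
    (htb : ∀ k, 1 ≤ k → k ≤ n → IsLaurent (tb k))
    (ha : ∀ k, 1 ≤ k → k ≤ n → ∀ z : ℂ, z ≠ 0 →
      a k z = 2 + (1 - z) ^ (2 * k) * ta k z)
    (hb : ∀ k, 1 ≤ k → k ≤ n → ∀ z : ℂ, z ≠ 0 →
      b k z = m + (1 - z) ^ (2 * k) * tb k z)
    (p : ℂ → ℂ → ℂ)
    (hp : ∀ z₁ z₂ : ℂ, p z₁ z₂ =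
      ∑ k ∈ Finset.range n, a (n - k) z₁ * b (k + 1) z₂ -
      ∑ k ∈ Finset.range (n - 1), a (n - k - 1) z₁ * b (k + 1) z₂) :
    ∃ (H : ℕ) (α β : ℕ → ℕ) (c : ℕ → ℂ → ℂ → ℂ),
      (∀ h < H, 2 * n ≤ α h + β h ∧ IsLaurent2 (c h)) ∧
      ∀ z₁ z₂ : ℂ, z₁ ≠ 0 → z₂ ≠ 0 →
        p z₁ z₂ = 2 * m +
          ∑ h ∈ Finset.range H, (1 - z₁) ^ α h * (1 - z₂) ^ β h * c h z₁ z₂ := by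
  classical
  obtain ⟨n', rfl⟩ : ∃ n'', n = n'' + 1 := ⟨n - 1, by omega⟩
  refine ⟨n' + 2,
    (fun h => if h = n' + 1 then 0 else if h = n' then 2 * (n' + 1) else 2 * (n' - h)),
    (fun h => if h = n' + 1 then 2 * (n' + 1) else if h = n' then 0 else 2 * (h + 1)),
    (fun h z₁ z₂ => if h = n' + 1 then 2 * tb (n' + 1) z₂
      else if h = n' then (1 - z₂) ^ 2 * ta (n' + 1) z₁ * tb 1 z₂ + (m : ℂ) * ta (n' + 1) z₁
      else (1 - z₂) ^ 2 * ta (n' - h) z₁ * tb (h + 2) z₂ - ta (n' - h) z₁ * tb (h + 1) z₂),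
    ?_, ?_⟩
  · intro h hh
    by_cases h1 : h = n' + 1
    · constructor
      · beta_reduce
        rw [if_pos h1, if_pos h1]
        omega
      · refine isLaurent2_congr (isLaurent2_right (isLaurent_const_mul 2
          (htb (n' + 1) (by omega) (by omega)))) fun z₁ z₂ _ _ => ?_
        beta_reduce
        rw [if_pos h1]
    · by_cases h2 : h = n'
      · constructor
        · beta_reduce
          rw [if_neg h1, if_neg h1, if_pos h2, if_pos h2]
          omega
        · refine isLaurent2_congr (isLaurent2_add
            (isLaurent2_mul (isLaurent2_mul (isLaurent2_right isLaurent_one_sub_sq)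
              (isLaurent2_left (hta (n' + 1) (by omega) (by omega))))
              (isLaurent2_right (htb 1 (by omega) (by omega))))
            (isLaurent2_left (isLaurent_const_mul (m : ℂ)
              (hta (n' + 1) (by omega) (by omega))))) fun z₁ z₂ _ _ => ?_
          beta_reduce
          rw [if_neg h1, if_pos h2]
      · constructor
        · beta_reduce
          rw [if_neg h1, if_neg h1, if_neg h2, if_neg h2]
          omega
        · refine isLaurent2_congr (isLaurent2_sub
            (isLaurent2_mul (isLaurent2_mul (isLaurent2_right isLaurent_one_sub_sq)
              (isLaurent2_left (hta (n' - h) (by omega) (by omega))))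
              (isLaurent2_right (htb (h + 2) (by omega) (by omega))))
            (isLaurent2_mul (isLaurent2_left (hta (n' - h) (by omega) (by omega)))
              (isLaurent2_right (htb (h + 1) (by omega) (by omega))))) fun z₁ z₂ _ _ => ?_
          beta_reduce
          rw [if_neg h1, if_neg h2]
  · intro z₁ z₂ h₁ h₂
    set F : ℕ → ℂ := fun k => (1 - z₁) ^ (2 * (n' + 1 - k)) * ta (n' + 1 - k) z₁ with hF
    set G : ℕ → ℂ := fun k => (1 - z₂) ^ (2 * (k + 1)) * tb (k + 1) z₂ with hG
    have hstep1 : p z₁ z₂ = (∑ k ∈ Finset.range (n' + 1), (2 + F k) * ((m : ℂ) + G k))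
        - ∑ k ∈ Finset.range n', (2 + F (k + 1)) * ((m : ℂ) + G k) := by
      rw [hp z₁ z₂]
      simp only [Nat.add_sub_cancel]
      congr 1
      · refine Finset.sum_congr rfl fun k hk => ?_
        have hk' := Finset.mem_range.mp hk
        rw [ha (n' + 1 - k) (by omega) (by omega) z₁ h₁,
          hb (k + 1) (by omega) (by omega) z₂ h₂]
      · refine Finset.sum_congr rfl fun k hk => ?_
        have hk' := Finset.mem_range.mp hk
        rw [ha (n' + 1 - k - 1) (by omega) (by omega) z₁ h₁,
          hb (k + 1) (by omega) (by omega) z₂ h₂]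
        simp only [hF, hG]
        rw [show n' + 1 - (k + 1) = n' + 1 - k - 1 from by omega]
    have e1 : (∑ k ∈ Finset.range (n' + 1), (2 + F k) * ((m : ℂ) + G k))
        = 2 * (m : ℂ) * ((n' : ℂ) + 1) + 2 * (∑ k ∈ Finset.range (n' + 1), G k)
          + (m : ℂ) * (∑ k ∈ Finset.range (n' + 1), F k)
          + ∑ k ∈ Finset.range (n' + 1), F k * G k := by
      have expand : ∀ k, (2 + F k) * ((m : ℂ) + G k)
          = (2 * (m : ℂ)) + (2 * G k + ((m : ℂ) * F k + F k * G k)) := fun k => by ring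
      simp only [expand, Finset.sum_add_distrib, Finset.sum_const, Finset.card_range,
        nsmul_eq_mul, ← Finset.mul_sum]
      push_cast
      ring
    have e2 : (∑ k ∈ Finset.range n', (2 + F (k + 1)) * ((m : ℂ) + G k))
        = 2 * (m : ℂ) * (n' : ℂ) + 2 * (∑ k ∈ Finset.range n', G k)
          + (m : ℂ) * (∑ k ∈ Finset.range n', F (k + 1))
          + ∑ k ∈ Finset.range n', F (k + 1) * G k := by
      have expand : ∀ k, (2 + F (k + 1)) * ((m : ℂ) + G k)
          = (2 * (m : ℂ)) + (2 * G k + ((m : ℂ) * F (k + 1) + F (k + 1) * G k)) :=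
        fun k => by ring
      simp only [expand, Finset.sum_add_distrib, Finset.sum_const, Finset.card_range,
        nsmul_eq_mul, ← Finset.mul_sum]
      push_cast
      ring
    have e3 : (∑ k ∈ Finset.range (n' + 1), G k) = (∑ k ∈ Finset.range n', G k) + G n' :=
      Finset.sum_range_succ G n'
    have e4 : (∑ k ∈ Finset.range (n' + 1), F k) = (∑ k ∈ Finset.range n', F (k + 1)) + F 0 :=
      Finset.sum_range_succ' F n'
    have e5 : (∑ k ∈ Finset.range (n' + 1), F k * G k)
        = (∑ k ∈ Finset.range n', F (k + 1) * G (k + 1)) + F 0 * G 0 :=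
      Finset.sum_range_succ' (fun k => F k * G k) n'
    have eR : ∀ h ∈ Finset.range (n' + 2),
        (1 - z₁) ^ (if h = n' + 1 then 0 else if h = n' then 2 * (n' + 1) else 2 * (n' - h)) *
        (1 - z₂) ^ (if h = n' + 1 then 2 * (n' + 1) else if h = n' then 0 else 2 * (h + 1)) *
        (if h = n' + 1 then 2 * tb (n' + 1) z₂
          else if h = n' then (1 - z₂) ^ 2 * ta (n' + 1) z₁ * tb 1 z₂ + (m : ℂ) * ta (n' + 1) z₁
          else (1 - z₂) ^ 2 * ta (n' - h) z₁ * tb (h + 2) z₂ - ta (n' - h) z₁ * tb (h + 1) z₂)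
        = if h = n' + 1 then 2 * G n' else if h = n' then F 0 * G 0 + (m : ℂ) * F 0
          else F (h + 1) * G (h + 1) - F (h + 1) * G h := by
      intro h hh
      by_cases hx1 : h = n' + 1
      · rw [if_pos hx1, if_pos hx1, if_pos hx1, if_pos hx1]
        simp only [hG]
        rw [pow_zero]
        ring
      · by_cases hx2 : h = n'
        · rw [if_neg hx1, if_neg hx1, if_neg hx1, if_neg hx1, if_pos hx2, if_pos hx2,
            if_pos hx2, if_pos hx2]
          simp only [hF, hG, Nat.sub_zero, Nat.zero_add, mul_one, pow_zero]
          ring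
        · have hlt : h < n' := by
            have := Finset.mem_range.mp hh
            omega
          rw [if_neg hx1, if_neg hx1, if_neg hx1, if_neg hx1, if_neg hx2, if_neg hx2,
            if_neg hx2, if_neg hx2]
          simp only [hF, hG]
          rw [show n' + 1 - (h + 1) = n' - h from by omega,
            show 2 * (h + 1 + 1) = 2 * (h + 1) + 2 from by ring, pow_add]
          ring
    beta_reduce
    rw [Finset.sum_congr rfl eR, Finset.sum_range_succ, Finset.sum_range_succ,
      if_pos rfl, if_neg (show ¬ n' = n' + 1 from by omega), if_pos rfl]
    have eR2 : ∀ h ∈ Finset.range n',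
        (if h = n' + 1 then 2 * G n' else if h = n' then F 0 * G 0 + (m : ℂ) * F 0
          else F (h + 1) * G (h + 1) - F (h + 1) * G h)
        = F (h + 1) * G (h + 1) - F (h + 1) * G h := by
      intro h hh
      have := Finset.mem_range.mp hh
      rw [if_neg (by omega), if_neg (by omega)]
    rw [Finset.sum_congr rfl eR2, Finset.sum_sub_distrib, hstep1, e1, e2, e3, e4, e5]
    push_cast
    ring
end

section
/- For n ∈ ℕ and (z₁,z₂) ∈ (ℂ\{0})², the anisotropic four directional box-spline symbol B_n(z₁,z₂) = 6·[(1+z₁)²(1+z₂+z₂²)²/(36 z₁z₂²)]^{⌈n/2⌉}·[(2+z₂+z₁z₂+2z₁z₂²)(2z₁+z₂+z₁z₂+2z₂²)/(36z₁z₂²)]^{⌊n/2⌋} equals 6·∑_{j=0}^{⌊n/2⌋} C(⌊n/2⌋, j)·(−1)^j·[(1+z₁)²/(4z₁)]^{n−j}·[(1−z₁)²/(4z₁)]^j·[(1+z₂+z₂²)²/(9z₂²)]^{n−j}·[(1−z₂²)²/(9z₂²)]^j. -/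
/-- The anisotropic four directional box-spline symbol B_n equals its
binomial expansion. -/
theorem stmt7 (n : ℕ) (hn : 1 ≤ n) (z₁ z₂ : ℂ) (h₁ : z₁ ≠ 0) (h₂ : z₂ ≠ 0) :
    6 * ((1 + z₁) ^ 2 * (1 + z₂ + z₂ ^ 2) ^ 2 / (36 * z₁ * z₂ ^ 2)) ^ ((n + 1) / 2) *
        ((2 + z₂ + z₁ * z₂ + 2 * z₁ * z₂ ^ 2) *
          (2 * z₁ + z₂ + z₁ * z₂ + 2 * z₂ ^ 2) / (36 * z₁ * z₂ ^ 2)) ^ (n / 2) =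
      6 * ∑ j ∈ Finset.range (n / 2 + 1),
        ((n / 2).choose j : ℂ) * (-1 : ℂ) ^ j *
          ((1 + z₁) ^ 2 / (4 * z₁)) ^ (n - j) * ((1 - z₁) ^ 2 / (4 * z₁)) ^ j *
          ((1 + z₂ + z₂ ^ 2) ^ 2 / (9 * z₂ ^ 2)) ^ (n - j) *
          ((1 - z₂ ^ 2) ^ 2 / (9 * z₂ ^ 2)) ^ j := by
  set m := n / 2 with hm
  set x : ℂ := (1 + z₁) ^ 2 * (1 + z₂ + z₂ ^ 2) ^ 2 / (36 * z₁ * z₂ ^ 2) with hx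
  set y : ℂ := (1 - z₁) ^ 2 * (1 - z₂ ^ 2) ^ 2 / (36 * z₁ * z₂ ^ 2) with hy
  have hmn : m ≤ n := Nat.div_le_self n 2
  have hceil : (n + 1) / 2 = n - m := by omega
  have hbase : (2 + z₂ + z₁ * z₂ + 2 * z₁ * z₂ ^ 2) *
      (2 * z₁ + z₂ + z₁ * z₂ + 2 * z₂ ^ 2) / (36 * z₁ * z₂ ^ 2) = x - y := by
    rw [hx, hy, div_sub_div_same]
    congr 1
    ring
  have hxsplit : ∀ j : ℕ, ((1 + z₁) ^ 2 / (4 * z₁)) ^ j *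
      ((1 + z₂ + z₂ ^ 2) ^ 2 / (9 * z₂ ^ 2)) ^ j = x ^ j := by
    intro j
    rw [← mul_pow, hx, div_mul_div_comm]
    norm_num
    ring_nf
  have hysplit : ∀ j : ℕ, ((1 - z₁) ^ 2 / (4 * z₁)) ^ j *
      ((1 - z₂ ^ 2) ^ 2 / (9 * z₂ ^ 2)) ^ j = y ^ j := by
    intro j
    rw [← mul_pow, hy, div_mul_div_comm]
    norm_num
    ring_nf
  have hsum : ∑ j ∈ Finset.range (m + 1),
      (m.choose j : ℂ) * (-1 : ℂ) ^ j *
        ((1 + z₁) ^ 2 / (4 * z₁)) ^ (n - j) * ((1 - z₁) ^ 2 / (4 * z₁)) ^ j *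
        ((1 + z₂ + z₂ ^ 2) ^ 2 / (9 * z₂ ^ 2)) ^ (n - j) *
        ((1 - z₂ ^ 2) ^ 2 / (9 * z₂ ^ 2)) ^ j
      = ∑ j ∈ Finset.range (m + 1),
        (m.choose j : ℂ) * (-1 : ℂ) ^ j * x ^ (n - j) * y ^ j := by
    refine Finset.sum_congr rfl fun j _ => ?_
    rw [← hxsplit (n - j), ← hysplit j]
    ring
  rw [hbase, hceil, hsum, sub_pow, Finset.mul_sum, Finset.mul_sum, ← Finset.sum_range_reflect]
  refine Finset.sum_congr rfl fun j hj => ?_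
  rw [Finset.mem_range] at hj
  have hj' : j ≤ m := by omega
  simp only [show m + 1 - 1 - j = m - j by omega]
  have hc : (m.choose (m - j)) = m.choose j := Nat.choose_symm hj'
  have hsign : (-1 : ℂ) ^ (m - j + m) = (-1 : ℂ) ^ j := by
    have : m - j + m = 2 * (m - j) + j := by omega
    rw [this, pow_add, pow_mul, neg_one_sq, one_pow, one_mul]
  have hxpow : x ^ (n - m) * x ^ (m - j) = x ^ (n - j) := by
    rw [← pow_add]; congr 1; omega
  have hyy : m - (m - j) = j := by omega
  rw [hc, hsign, hyy]
  calc 6 * x ^ (n - m) * ((-1 : ℂ) ^ j * x ^ (m - j) * y ^ j * (m.choose j : ℂ))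
      = (m.choose j : ℂ) * (-1 : ℂ) ^ j * (x ^ (n - m) * x ^ (m - j)) * y ^ j * 6 := by ring
    _ = 6 * ((m.choose j : ℂ) * (-1 : ℂ) ^ j * x ^ (n - j) * y ^ j) := by rw [hxpow]; ring
end

section
/- Let m ≥ 2, n ∈ ℕ, and for β ∈ {−n+1,...,n} and ε ∈ {1,...,m−1} define the Lagrange basis polynomial L_β(t) = ∏_{γ=−n+1, γ≠β}^{n} (t−γ)/(β−γ). Then L_β(ε/m) = (−1)^{β+n} / [(2n−1)!·(ε/m − β)] · C(2n−1, n−β) · (−n+1−ε/m)_{2n}, where (x)_{2n} = x(x+1)⋯(x+2n−1) is the Pochhammer symbol and C denotes the binomial coefficient. -/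
/-!
On consecutive nodes `a, a + 1, …, a + N - 1` the denominator of the `p`-th Lagrange basis
polynomial is `∏_{q ≠ p} (p - q) = (-1)^(N-1-p) p! (N-1-p)!`,
i.e. `(-1)^(N-1-p) (N-1)! / C(N-1, p)`, while its numerator at `x` is the full node
polynomial `∏_q (x - (a + q))` divided by `x - (a + p)`.
For the nodes `-n+1, …, n` and `x = ε/m ∈ (0, 1)`, which is never a node, the node
polynomial is the Pochhammer product `(-n+1-x)_{2n}` since `2n` is even.
-/

open Finset
open scoped Nat

theorem Finset.prod_range_natCast_sub_eq_factorial {R : Type*} [CommRing R] (j : ℕ) :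
    ∏ i ∈ range j, ((j : R) - i) = j ! := by
  rw [← prod_range_reflect, ← prod_range_add_one_eq_factorial, Nat.cast_prod]
  refine prod_congr rfl fun i hi => ?_
  rw [mem_range] at hi
  rw [show j - 1 - i = j - (i + 1) by omega, Nat.cast_sub (by omega)]
  push_cast
  ring

theorem Finset.prod_range_erase_natCast_sub {R : Type*} [CommRing R] {p N : ℕ} (hp : p < N) :
    ∏ q ∈ (range N).erase p, ((p : R) - q) = (-1) ^ (N - 1 - p) * p ! * (N - 1 - p)! := by
  have hsplit : (range N).erase p = range p ∪ Ico (p + 1) N := by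
    ext q
    simp only [mem_erase, mem_range, mem_union, mem_Ico]
    omega
  have hdisj : Disjoint (range p) (Ico (p + 1) N) := by
    simp only [disjoint_left, mem_range, mem_Ico]
    omega
  have hright : ∏ q ∈ Ico (p + 1) N, ((p : R) - q) = (-1) ^ (N - 1 - p) * (N - 1 - p)! := by
    rw [prod_Ico_eq_prod_range, show N - (p + 1) = N - 1 - p by omega,
      ← prod_range_add_one_eq_factorial, Nat.cast_prod, ← card_range (N - 1 - p),
      ← prod_const, card_range, ← prod_mul_distrib]
    refine prod_congr rfl fun i _ => ?_
    push_cast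
    ring
  rw [hsplit, prod_union hdisj, prod_range_natCast_sub_eq_factorial, hright]
  ring

theorem Int.prod_Icc_erase_eq_prod_range_erase {M : Type*} [CommMonoid M] (f : ℤ → M)
    {a b β : ℤ} (hβ : β ∈ Icc a b) :
    ∏ γ ∈ (Icc a b).erase β, f γ =
      ∏ q ∈ (Finset.range (b + 1 - a).toNat).erase (β - a).toNat, f (a + q) := by
  have hβ' : (Nat.castEmbedding.trans (addLeftEmbedding a)) (β - a).toNat = β := by
    rw [mem_Icc] at hβ
    simp only [Function.Embedding.trans_apply, Nat.castEmbedding_apply, addLeftEmbedding_apply]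
    omega
  conv_lhs => rw [Int.Icc_eq_finset_map, ← hβ', ← map_erase, prod_map]
  rfl

theorem prod_range_erase_lagrange_eq {K : Type*} [Field K] [CharZero K] {p N : ℕ} (hp : p < N)
    (a x : K) (hx : x ≠ a + p) :
    ∏ q ∈ (range N).erase p, (x - (a + q)) / ((a + p) - (a + q)) =
      (-1) ^ (N - 1 - p) / ((N - 1)! * (x - (a + p))) * (N - 1).choose p *
        ∏ q ∈ range N, (x - (a + q)) := by
  have hnum := mul_prod_erase (range N) (fun q : ℕ => x - (a + q)) (mem_range.2 hp)
  have hden : ∏ q ∈ (range N).erase p, ((a + p) - (a + q)) =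
      (-1) ^ (N - 1 - p) * p ! * (N - 1 - p)! := by
    simp only [add_sub_add_left_eq_sub]
    exact prod_range_erase_natCast_sub hp
  have hchoose : ((N - 1).choose p : K) * p ! * (N - 1 - p)! = (N - 1)! := by
    exact_mod_cast Nat.choose_mul_factorial_mul_factorial (by omega : p ≤ N - 1)
  have hsign : ((-1 : K) ^ (N - 1 - p)) ^ 2 = 1 := by
    rw [← pow_mul, pow_mul', neg_one_sq, one_pow]
  have hx' := sub_ne_zero.2 hx
  have hc : ((N - 1).choose p : K) ≠ 0 := by exact_mod_cast (Nat.choose_pos (by omega)).ne'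
  have hp! : (p ! : K) ≠ 0 := Nat.cast_ne_zero.2 p.factorial_ne_zero
  have hr! : ((N - 1 - p)! : K) ≠ 0 := Nat.cast_ne_zero.2 (N - 1 - p).factorial_ne_zero
  rw [prod_div_distrib, hden, ← hnum, ← hchoose]
  field_simp
  rw [hsign, mul_one]

theorem Int.cast_ne_of_pos_of_lt_one {K : Type*} [Field K] [LinearOrder K] [IsStrictOrderedRing K]
    {x : K} (h0 : 0 < x) (h1 : x < 1) (β : ℤ) : x ≠ β := by
  rintro rfl
  have : (0 : ℤ) < β := by exact_mod_cast h0
  have : β < 1 := by exact_mod_cast h1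
  omega

theorem stmt13_general (m n : ℕ)
    (β : ℤ) (hβ₁ : -(n : ℤ) + 1 ≤ β) (hβ₂ : β ≤ n)
    (ε : ℕ) (hε₁ : 1 ≤ ε) (hε₂ : ε ≤ m - 1) :
    (∏ γ ∈ (Finset.Icc (-(n : ℤ) + 1) (n : ℤ)).erase β,
        (((ε : ℚ) / m - γ) / ((β : ℚ) - γ))) =
      (-1 : ℚ) ^ (β + n) / (((2 * n - 1).factorial : ℚ) * ((ε : ℚ) / m - β)) *
        (((2 * n - 1).choose ((n : ℤ) - β).toNat : ℚ)) *
        ∏ i ∈ Finset.range (2 * n), (-(n : ℚ) + 1 - (ε : ℚ) / m + i) := by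
  set x : ℚ := ε / m
  set p := (β - (-(n : ℤ) + 1)).toNat
  have hβp : (β : ℚ) = -(n : ℚ) + 1 + p := by
    rw [show β = -(n : ℤ) + 1 + p by omega]
    push_cast
    ring
  have hx : x ≠ -(n : ℚ) + 1 + p := by
    have hm0 : (0 : ℚ) < m := by exact_mod_cast (by omega : 0 < m)
    rw [← hβp]
    refine Int.cast_ne_of_pos_of_lt_one (by positivity) ?_ β
    rw [div_lt_one hm0]
    exact_mod_cast (by omega : ε < m)
  have hsign : (-1 : ℚ) ^ (β + n) = (-1) ^ (2 * n - 1 - p) := by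
    rw [show β + n = ((2 * n - 1 - p : ℕ) : ℤ) + 2 * β by omega, zpow_add₀ (by norm_num),
      zpow_natCast, zpow_mul]
    norm_num
  have hchoose : (2 * n - 1).choose ((n : ℤ) - β).toNat = (2 * n - 1).choose p :=
    Nat.choose_symm_of_eq_add (by omega)
  have hnodes : ∏ i ∈ range (2 * n), (-(n : ℚ) + 1 - x + i) =
      ∏ q ∈ range (2 * n), (x - (-(n : ℚ) + 1 + q)) := by
    calc ∏ i ∈ range (2 * n), (-(n : ℚ) + 1 - x + i)
        = ∏ q ∈ range (2 * n), -(x - (-(n : ℚ) + 1 + q)) := prod_congr rfl fun _ _ => by ring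
      _ = _ := by rw [prod_neg, card_range, (even_two_mul n).neg_one_pow, one_mul]
  rw [Int.prod_Icc_erase_eq_prod_range_erase _ (mem_Icc.2 ⟨hβ₁, hβ₂⟩),
    show ((n : ℤ) + 1 - (-(n : ℤ) + 1)).toNat = 2 * n by omega]
  push_cast
  rw [hβp, prod_range_erase_lagrange_eq (by omega) _ _ hx, hsign, hchoose, hnodes]

/-- Closed formula for the Lagrange basis polynomial on nodes {−n+1,…,n}
evaluated at ε/m, giving the Dubuc–Deslauriers mask coefficients. -/
theorem stmt13 (m n : ℕ) (hm : 2 ≤ m) (hn : 1 ≤ n)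
    (β : ℤ) (hβ₁ : -(n : ℤ) + 1 ≤ β) (hβ₂ : β ≤ n)
    (ε : ℕ) (hε₁ : 1 ≤ ε) (hε₂ : ε ≤ m - 1) :
    (∏ γ ∈ (Finset.Icc (-(n : ℤ) + 1) (n : ℤ)).erase β,
        (((ε : ℚ) / m - γ) / ((β : ℚ) - γ))) =
      (-1 : ℚ) ^ (β + n) / (((2 * n - 1).factorial : ℚ) * ((ε : ℚ) / m - β)) *
        (((2 * n - 1).choose ((n : ℤ) - β).toNat : ℚ)) *
        ∏ i ∈ Finset.range (2 * n), (-(n : ℚ) + 1 - (ε : ℚ) / m + i) :=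
  stmt13_general m n β hβ₁ hβ₂ ε hε₁ hε₂
end

section
/- Let n ∈ ℕ and for k ∈ {1,...,n} let a_k, b_k be Laurent polynomials with supports supp(a_k) ⊆ {1−2k,...,2k−1} and supp(b_k) ⊆ {1−mk,...,mk−1} respectively (m ≥ 2). Then the bivariate Laurent polynomial p(z₁,z₂) = ∑_{k=0}^{n-1} a_{n-k}(z₁) b_{k+1}(z₂) − ∑_{k=0}^{n-2} a_{n-k-1}(z₁) b_{k+1}(z₂) is supported in {(α₁,α₂) ∈ ℤ² : m|α₁| + 2|α₂| ≤ 2mn − 2 + m}, which is contained in {1−2n,...,2n−1} × {1−mn,...,mn−1}. -/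
/-- Support of the anisotropic combination mask: if the coefficient
sequences a_k are supported in {1−2k,…,2k−1} and b_k in {1−mk,…,mk−1},
then the coefficients P(i,j) = ∑_{k<n} a_{n−k}(i) b_{k+1}(j) −
∑_{k<n−1} a_{n−k−1}(i) b_{k+1}(j) are supported in the diamond
{m|i|+2|j| ≤ 2mn−2+m}, which lies inside
{1−2n,…,2n−1} × {1−mn,…,mn−1}. -/
theorem stmt15 (m n : ℕ) (hm : 2 ≤ m) (hn : 1 ≤ n)
    (a b : ℕ → ℤ → ℂ)
    (ha : ∀ k, 1 ≤ k → k ≤ n → ∀ i : ℤ, a k i ≠ 0 →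
      1 - 2 * (k : ℤ) ≤ i ∧ i ≤ 2 * (k : ℤ) - 1)
    (hb : ∀ k, 1 ≤ k → k ≤ n → ∀ j : ℤ, b k j ≠ 0 →
      1 - (m : ℤ) * k ≤ j ∧ j ≤ (m : ℤ) * k - 1)
    (P : ℤ → ℤ → ℂ)
    (hP : ∀ i j : ℤ, P i j =
      ∑ k ∈ Finset.range n, a (n - k) i * b (k + 1) j -
      ∑ k ∈ Finset.range (n - 1), a (n - k - 1) i * b (k + 1) j) :
    ∀ i j : ℤ, P i j ≠ 0 →
      ((m : ℤ) * |i| + 2 * |j| ≤ 2 * (m : ℤ) * n - 2 + m) ∧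
      (1 - 2 * (n : ℤ) ≤ i ∧ i ≤ 2 * (n : ℤ) - 1) ∧
      (1 - (m : ℤ) * n ≤ j ∧ j ≤ (m : ℤ) * n - 1) := by
  intro i j hPij
  have key : ∃ l k : ℕ, 1 ≤ l ∧ l + k ≤ n ∧ a l i ≠ 0 ∧ b (k + 1) j ≠ 0 := by
    by_contra h
    push_neg at h
    apply hPij
    rw [hP]
    have h1 : ∀ k ∈ Finset.range n, a (n - k) i * b (k + 1) j = 0 := by
      intro k hk
      simp only [Finset.mem_range] at hk
      rcases eq_or_ne (a (n - k) i) 0 with h0 | h0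
      · rw [h0, zero_mul]
      · rw [h (n - k) k (by omega) (by omega) h0, mul_zero]
    have h2 : ∀ k ∈ Finset.range (n - 1), a (n - k - 1) i * b (k + 1) j = 0 := by
      intro k hk
      simp only [Finset.mem_range] at hk
      rcases eq_or_ne (a (n - k - 1) i) 0 with h0 | h0
      · rw [h0, zero_mul]
      · rw [h (n - k - 1) k (by omega) (by omega) h0, mul_zero]
    rw [Finset.sum_eq_zero h1, Finset.sum_eq_zero h2, sub_zero]
  obtain ⟨l, k, hl, hlk, hai, hbj⟩ := key
  have hi := ha l hl (by omega) i hai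
  have hj := hb (k + 1) (by omega) (by omega) j hbj
  push_cast at hj
  have habsi : |i| ≤ 2 * (l : ℤ) - 1 := abs_le.2 ⟨by linarith [hi.1], hi.2⟩
  have habsj : |j| ≤ (m : ℤ) * ((k : ℤ) + 1) - 1 := abs_le.2 ⟨by linarith [hj.1], hj.2⟩
  have hcast : (l : ℤ) + (k : ℤ) ≤ (n : ℤ) := by exact_mod_cast hlk
  have hm' : (2 : ℤ) ≤ (m : ℤ) := by exact_mod_cast hm
  have hl' : (1 : ℤ) ≤ (l : ℤ) := by exact_mod_cast hl
  have hk0 : (0 : ℤ) ≤ (k : ℤ) := Int.natCast_nonneg k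
  have hmi : (m : ℤ) * |i| ≤ (m : ℤ) * (2 * (l : ℤ) - 1) :=
    mul_le_mul_of_nonneg_left habsi (by linarith)
  have hmn : (m : ℤ) * ((l : ℤ) + (k : ℤ)) ≤ (m : ℤ) * (n : ℤ) :=
    mul_le_mul_of_nonneg_left hcast (by linarith)
  have habsi' := neg_abs_le i
  have habsj' := neg_abs_le j
  have habs2i := le_abs_self i
  have habs2j := le_abs_self j
  refine ⟨by nlinarith, ⟨by nlinarith, by nlinarith⟩, by nlinarith, by nlinarith⟩
end
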